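/- Let R be the compact topological ring (ℤ/2ℤ)^ℕ with pointwise addition and multiplication and the product topology, let R̃ ⊆ R be the (dense) subring of finitely supported sequences, and let G = (R × R) ⋊ R be the generalized Heisenberg group defined via the continuous action π : R × (R × R) → R × R, π(f, (a, x)) = (a + f·x, x), with the product topology. Let B = {((0, x), 0) : x ∈ R̃} ≤ G and let P = Γ(B) ≤ Aut(G) be the group of inner automorphisms by elements of B. Then G is a compact two-step nilpotent topological group and the topological semidirect product G ⋊ P is NOT minimal. -/

import Mathlib

open scoped Topology
open scoped commutatorElement

/-- The group of self-homeomorphisms of `X`, with composition as multiplication: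
`(f * g) x = f (g x)`, identity `Homeomorph.refl` and inverse `Homeomorph.symm`. -/
instance homeoGroup (X : Type*) [TopologicalSpace X] : Group (X ≃ₜ X) where
  mul f g := g.trans f
  one := Homeomorph.refl X
  inv := Homeomorph.symm
  mul_assoc f g h := rfl
  one_mul f := rfl
  mul_one f := rfl
  inv_mul_cancel f := by ext x; exact f.symm_apply_apply x

/-- The compact-open topology on the homeomorphism group `H(X)`, induced from the
compact-open topology on `C(X, X)`. -/
def coTop (X : Type*) [TopologicalSpace X] : TopologicalSpace (X ≃ₜ X) :=
  TopologicalSpace.induced (fun f : X ≃ₜ X => (f : C(X, X))) ContinuousMap.compactOpen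

/-- The group `Aut(G)` of all topological group automorphisms of a topological group `G`
(group automorphisms that are homeomorphisms), as a subgroup of the homeomorphism
group of `G`. -/
def topAut (G : Type*) [Group G] [TopologicalSpace G] : Subgroup (G ≃ₜ G) where
  carrier := {f : G ≃ₜ G | ∀ a b : G, f (a * b) = f a * f b}
  one_mem' := fun _ _ => rfl
  mul_mem' := by
    intro f g hf hg a b
    show f (g (a * b)) = f (g a) * f (g b)
    rw [hg, hf]
  inv_mem' := by
    intro f hf a b
    show f.symm (a * b) = f.symm a * f.symm b
    apply f.injective
    rw [hf]
    simp

/-- The compact-open topology on `Aut(G)`. -/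
def autTop (G : Type*) [Group G] [TopologicalSpace G] : TopologicalSpace ↥(topAut G) :=
  TopologicalSpace.induced (Subtype.val : ↥(topAut G) → G ≃ₜ G) (coTop G)

/-- The tautological action of a subgroup `P ≤ Aut(G)` on `G`, as a homomorphism
`P →* MulAut G`. -/
def actHom {G : Type*} [Group G] [TopologicalSpace G] (P : Subgroup ↥(topAut G)) :
    ↥P →* MulAut G where
  toFun p := MulEquiv.mk' p.1.1.toEquiv (fun a b => p.1.2 a b)
  map_one' := rfl
  map_mul' _ _ := rfl

/-- The topology on a subgroup `P ≤ Aut(G)`, inherited from the compact-open topology. -/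
def subAutTop {G : Type*} [Group G] [TopologicalSpace G] (P : Subgroup ↥(topAut G)) :
    TopologicalSpace ↥P :=
  TopologicalSpace.induced (Subtype.val : ↥P → ↥(topAut G)) (autTop G)

/-- The product topology on the topological semidirect product `G ⋊ P`, whose underlying
group is `SemidirectProduct G ↥P (actHom P)`, i.e. the multiplication is
`(g₁, p₁) * (g₂, p₂) = (g₁ * p₁ g₂, p₁ * p₂)`. -/
def sdpTop {G : Type*} [Group G] [TopologicalSpace G] (P : Subgroup ↥(topAut G)) :
    TopologicalSpace (G ⋊[actHom P] ↥P) :=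
  TopologicalSpace.induced (fun x : G ⋊[actHom P] ↥P => (x.left, x.right))
    (@instTopologicalSpaceProd G ↥P _ (subAutTop P))

/-- A (Hausdorff) topological group `(G, τ)` is *minimal* if every Hausdorff group topology
on `G` coarser than `τ` equals `τ`. -/
def IsMinimalTopGroup (G : Type*) [Group G] (τ : TopologicalSpace G) : Prop :=
  ∀ σ : TopologicalSpace G, τ ≤ σ → @IsTopologicalGroup G σ _ → @T2Space G σ → σ = τ

/-- The canonical homomorphism `Γ : G → Aut(G)` sending `g` to the inner automorphism
`γ_g : x ↦ g * x * g⁻¹`; its range is the subgroup `Inn(G)` of inner automorphisms. -/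
def innerAutHom (G : Type*) [Group G] [TopologicalSpace G] [IsTopologicalGroup G] :
    G →* ↥(topAut G) where
  toFun g := ⟨(Homeomorph.mulLeft g).trans (Homeomorph.mulRight g⁻¹), by
    intro a b
    show g * (a * b) * g⁻¹ = (g * a * g⁻¹) * (g * b * g⁻¹)
    group⟩
  map_one' := by
    apply Subtype.ext
    ext x
    show (1 : G) * x * (1 : G)⁻¹ = x
    group
  map_mul' g h := by
    apply Subtype.ext
    ext x
    show (g * h) * x * (g * h)⁻¹ = g * (h * x * h⁻¹) * g⁻¹
    group

/-- The compact ring `R = (ℤ/2ℤ)^ℕ` with pointwise operations and the product topology. -/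
abbrev RH : Type := ℕ → ZMod 2

/-- The carrier of the generalized Heisenberg group `G = (R × R) ⋊ R`. -/
def Heis : Type := (RH × RH) × RH

/-- The multiplication of the generalized Heisenberg group, corresponding to the action
`π(f, (a, x)) = (a + f·x, x)`:
`((a₁, x₁), f₁) · ((a₂, x₂), f₂) = ((a₁ + a₂ + f₁·x₂, x₁ + x₂), f₁ + f₂)`. -/
def heisMul (p q : Heis) : Heis :=
  ((p.1.1 + q.1.1 + p.2 * q.1.2, p.1.2 + q.1.2), p.2 + q.2)

def heisInv (p : Heis) : Heis :=
  ((-p.1.1 + p.2 * p.1.2, -p.1.2), -p.2)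

instance : Group Heis where
  mul := heisMul
  one := ((0, 0), 0)
  inv := heisInv
  mul_assoc p q r := by
    show heisMul (heisMul p q) r = heisMul p (heisMul q r)
    simp only [heisMul]
    exact Prod.ext (Prod.ext (by ring) (by ring)) (by ring)
  one_mul p := by
    show heisMul ((0, 0), 0) p = p
    simp only [heisMul]
    exact Prod.ext (Prod.ext (by ring) (by ring)) (by ring)
  mul_one p := by
    show heisMul p ((0, 0), 0) = p
    simp only [heisMul]
    exact Prod.ext (Prod.ext (by ring) (by ring)) (by ring)
  inv_mul_cancel p := by
    show heisMul (heisInv p) p = ((0, 0), 0)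
    simp only [heisMul, heisInv]
    exact Prod.ext (Prod.ext (by ring) (by ring)) (by ring)

instance : TopologicalSpace Heis := inferInstanceAs (TopologicalSpace ((RH × RH) × RH))
instance : CompactSpace Heis := inferInstanceAs (CompactSpace ((RH × RH) × RH))
instance : T2Space Heis := inferInstanceAs (T2Space ((RH × RH) × RH))

instance : IsTopologicalGroup Heis where
  continuous_mul := by
    show Continuous fun p : Heis × Heis => heisMul p.1 p.2
    unfold heisMul
    fun_prop
  continuous_inv := by
    show Continuous fun p : Heis => heisInv p
    unfold heisInv
    fun_prop

/-- The subgroup `B = {((0, x), 0) : x ∈ R̃} ≤ G`, where `R̃ ⊆ R` is the subring of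
finitely supported sequences. -/
def heisB : Subgroup Heis where
  carrier := {p : Heis | p.1.1 = 0 ∧ (Function.support p.1.2).Finite ∧ p.2 = 0}
  one_mem' := by
    refine ⟨rfl, ?_, rfl⟩
    show (Function.support (0 : RH)).Finite
    simp
  mul_mem' := by
    rintro p q ⟨ha1, ha2, ha3⟩ ⟨hb1, hb2, hb3⟩
    refine ⟨?_, ?_, ?_⟩
    · show p.1.1 + q.1.1 + p.2 * q.1.2 = 0
      rw [ha1, hb1, ha3]; ring
    · show (Function.support (p.1.2 + q.1.2)).Finite
      exact (ha2.union hb2).subset (Function.support_add _ _)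
    · show p.2 + q.2 = 0
      rw [ha3, hb3]; ring
  inv_mem' := by
    rintro p ⟨ha1, ha2, ha3⟩
    refine ⟨?_, ?_, ?_⟩
    · show -p.1.1 + p.2 * p.1.2 = 0
      rw [ha1, ha3]; ring
    · show (Function.support (-p.1.2)).Finite
      rwa [Function.support_neg]
    · show -p.2 = 0
      rw [ha3]; ring

/-- `P = Γ(B) ≤ Aut(G)`: the group of inner automorphisms of the generalized Heisenberg
group `G` by elements of `B`. -/
def heisP : Subgroup ↥(topAut Heis) := Subgroup.map (innerAutHom Heis) heisB

/-!
Every `p ∈ P` is conjugation by a unique `c(p) = ((0, x), 0) ∈ B`, and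
`(g, p) ↦ (g · c(p), c(p))` is a group isomorphism `G ⋊ P ≅ G × B`. The map `x ↦ x - x₀` on `R`
kills exactly the constant sequences, which meet `R̃` only in `0`. Hence
`(g, p) ↦ (g · c(p), x - x₀)` is a continuous injective homomorphism into the Hausdorff group
`G × R`, and the topology it pulls back is a Hausdorff group topology coarser than that of
`G ⋊ P`. It is strictly coarser: for `x` the indicator of `[0, m]`, the elements `(c⁻¹, γ_c)`
tend to `1` in it as `m → ∞`, although `x₀ = 1` throughout.
-/

open Filter Function SemidirectProduct

theorem not_isMinimalTopGroup_of_injective {G K : Type*} [Group G] [Group K]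
    [TopologicalSpace K] [IsTopologicalGroup K] [T2Space K] (τ : TopologicalSpace G)
    (f : G →* K) (hf : Injective f) (hcont : Continuous[τ, _] f)
    (hne : TopologicalSpace.induced f ‹_› ≠ τ) : ¬ IsMinimalTopGroup G τ := fun hmin =>
  hne <| hmin _ (continuous_iff_le_induced.1 hcont) (topologicalGroup_induced f)
    (letI := TopologicalSpace.induced f ‹_›; .of_injective_continuous hf continuous_induced_dom)

section SubHead

variable {A : Type*} [AddCommGroup A]

def subHead : (ℕ → A) →+ (ℕ → A) where
  toFun x := x - const ℕ (x 0)
  map_zero' := by ext; simp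
  map_add' x y := by ext; simp only [Pi.add_apply, Pi.sub_apply, const_apply]; abel

lemma subHead_apply (x : ℕ → A) (i : ℕ) : subHead x i = x i - x 0 := rfl

lemma subHead_injOn : Set.InjOn subHead {x : ℕ → A | (support x).Finite} := by
  intro x hx y hy hxy
  have hconst : ∀ i, x i - y i = x 0 - y 0 := fun i =>
    sub_eq_sub_iff_sub_eq_sub.2 (congrFun hxy i)
  by_contra hne
  obtain ⟨i, hi⟩ := ne_iff.1 hne
  refine Set.infinite_univ ((hx.union hy).subset fun j _ => ?_)
  by_contra hj
  simp only [Set.mem_union, mem_support, not_or, not_not] at hj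
  apply hi
  rw [← sub_eq_zero, hconst, ← hconst j, hj.1, hj.2, sub_zero]

lemma continuous_subHead [TopologicalSpace A] [ContinuousSub A] :
    Continuous (subHead : (ℕ → A) → (ℕ → A)) :=
  continuous_pi fun i => (continuous_apply i).sub (continuous_apply 0)

lemma tendsto_subHead_initialSegment [TopologicalSpace A] (a : A) :
    Tendsto (fun m => subHead fun i => if i ≤ m then a else 0) atTop (𝓝 0) :=
  tendsto_pi_nhds.2 fun i => tendsto_const_nhds.congr' <|
    (eventually_ge_atTop i).mono fun m hm => by simp [subHead_apply, hm]

end SubHead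

def heisMk (a x f : RH) : Heis := ((a, x), f)

lemma heis_mem_center (c : RH) : heisMk c 0 0 ∈ Subgroup.center Heis := by
  refine Subgroup.mem_center_iff.2 fun g => ?_
  show heisMul g (heisMk c 0 0) = heisMul (heisMk c 0 0) g
  simp only [heisMul, heisMk]
  exact Prod.ext (Prod.ext (by ring) (by ring)) (by ring)

lemma heis_commutatorElement (a b : Heis) :
    ⁅a, b⁆ = heisMk (a.2 * b.1.2 - b.2 * a.1.2) 0 0 := by
  show heisMul (heisMul (heisMul a b) (heisInv a)) (heisInv b) = _
  simp only [heisMul, heisInv, heisMk]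
  exact Prod.ext (Prod.ext (by ring) (by ring)) (by ring)

lemma innerAutHom_apply_of_mem_heisB {b : Heis} (hb : b ∈ heisB) (g : Heis) :
    (innerAutHom Heis b).1 g = heisMk (g.1.1 - g.2 * b.1.2) g.1.2 g.2 := by
  obtain ⟨hb₁, -, hb₃⟩ := hb
  show heisMul (heisMul b g) (heisInv b) = _
  simp only [heisMul, heisInv, heisMk, hb₁, hb₃]
  exact Prod.ext (Prod.ext (by ring) (by ring)) (by ring)

def heisPCoord (p : heisP) : RH := -(p.1.1 (heisMk 0 0 1)).1.1

lemma heisPCoord_eq {p : heisP} {b : Heis} (hb : b ∈ heisB) (h : innerAutHom Heis b = p) :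
    heisPCoord p = b.1.2 := by
  rw [heisPCoord, ← h, innerAutHom_apply_of_mem_heisB hb]
  simp [heisMk]

def conjugator (p : heisP) : Heis := heisMk 0 (heisPCoord p) 0

lemma conjugator_eq {p : heisP} {b : Heis} (hb : b ∈ heisB) (h : innerAutHom Heis b = p) :
    conjugator p = b :=
  Prod.ext (Prod.ext hb.1.symm (heisPCoord_eq hb h)) hb.2.2.symm

lemma conjugator_mem (p : heisP) : conjugator p ∈ heisB := by
  obtain ⟨b, hb, h⟩ := Subgroup.mem_map.1 p.2
  rwa [conjugator_eq hb h]

lemma innerAutHom_conjugator (p : heisP) : innerAutHom Heis (conjugator p) = p := by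
  obtain ⟨b, hb, h⟩ := Subgroup.mem_map.1 p.2
  rwa [conjugator_eq hb h]

def conjugatorHom : heisP →* Heis where
  toFun := conjugator
  map_one' := conjugator_eq (one_mem _) (map_one _)
  map_mul' p q := conjugator_eq (mul_mem (conjugator_mem p) (conjugator_mem q)) <| by
    rw [map_mul, innerAutHom_conjugator, innerAutHom_conjugator]; rfl

lemma actHom_heisP_apply (p : heisP) (g : Heis) :
    actHom heisP p g = conjugator p * g * (conjugator p)⁻¹ :=
  (congrArg (fun φ : topAut Heis => φ.1 g) (innerAutHom_conjugator p)).symm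

def heisXHom : Heis →* Multiplicative RH where
  toFun g := .ofAdd g.1.2
  map_one' := rfl
  map_mul' _ _ := rfl

abbrev HeisSdp : Type := Heis ⋊[actHom heisP] heisP

def comparisonHom : HeisSdp →* Heis × Multiplicative RH :=
  (lift (.id Heis) conjugatorHom fun p => MonoidHom.ext (actHom_heisP_apply p)).prod
    ((AddMonoidHom.toMultiplicative subHead).comp ((heisXHom.comp conjugatorHom).comp rightHom))

lemma comparisonHom_apply (h : HeisSdp) :
    comparisonHom h = (h.left * conjugator h.right, .ofAdd (subHead (heisPCoord h.right))) :=
  rfl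

lemma comparisonHom_injective : Injective comparisonHom := by
  rintro ⟨g₁, p₁⟩ ⟨g₂, p₂⟩ h
  obtain ⟨hleft, hright⟩ := Prod.mk.inj h
  have hcoord : heisPCoord p₁ = heisPCoord p₂ :=
    subHead_injOn (conjugator_mem p₁).2.1 (conjugator_mem p₂).2.1
      (Multiplicative.ofAdd.injective hright)
  have hp : p₁ = p₂ := Subtype.ext <| by
    rw [← innerAutHom_conjugator p₁, ← innerAutHom_conjugator p₂, conjugator, conjugator,
      hcoord]
  subst hp
  exact SemidirectProduct.ext (mul_right_cancel hleft) rfl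

lemma continuous_heisPCoord : Continuous[subAutTop heisP, _] heisPCoord := by
  let := subAutTop heisP
  have hcoe : Continuous fun p : heisP => (p.1.1 : C(Heis, Heis)) := by
    rw [continuous_iff_le_induced]
    show subAutTop heisP ≤ _
    unfold subAutTop autTop coTop
    rw [induced_compose, induced_compose]
    exact le_rfl
  exact ((continuous_eval_const _).comp hcoe).fst.fst.neg

lemma continuous_heisPCoord_right :
    Continuous[sdpTop heisP, _] fun h : HeisSdp => heisPCoord h.right := by
  let := sdpTop heisP
  let := subAutTop heisP
  have hpair : Continuous fun h : HeisSdp => (h.left, h.right) := continuous_induced_dom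
  exact continuous_heisPCoord.comp hpair.snd

lemma continuous_comparisonHom : Continuous[sdpTop heisP, _] comparisonHom := by
  let := sdpTop heisP
  let := subAutTop heisP
  have hpair : Continuous fun h : HeisSdp => (h.left, h.right) := continuous_induced_dom
  have hcoord := continuous_heisPCoord_right
  have hconj : Continuous fun h : HeisSdp => conjugator h.right :=
    (continuous_const.prodMk hcoord).prodMk continuous_const
  show Continuous fun h : HeisSdp =>
    (h.left * conjugator h.right, Multiplicative.ofAdd (subHead (heisPCoord h.right)))
  exact (hpair.fst.mul hconj).prodMk
    (continuous_ofAdd.comp ((continuous_subHead (A := ZMod 2)).comp hcoord))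

lemma induced_comparisonHom_ne :
    TopologicalSpace.induced comparisonHom inferInstance ≠ sdpTop heisP := by
  intro heq
  let x : ℕ → RH := fun m i => if i ≤ m then 1 else 0
  have hx : ∀ m, heisMk 0 (x m) 0 ∈ heisB := fun m =>
    ⟨rfl, (Set.finite_Iic m).subset fun i hi => by_contra fun hi' => hi (if_neg hi'), rfl⟩
  let h : ℕ → HeisSdp := fun m =>
    ⟨(heisMk 0 (x m) 0)⁻¹, ⟨_, Subgroup.mem_map_of_mem _ (hx m)⟩⟩
  have hcoord : ∀ m, heisPCoord (h m).right = x m := fun m => heisPCoord_eq (hx m) rfl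
  have hconv : Tendsto h atTop (@nhds _ (sdpTop heisP) 1) := by
    rw [← heq, nhds_induced, tendsto_comap_iff, map_one]
    have : comparisonHom ∘ h = fun m => (1, .ofAdd (subHead (x m))) := funext fun m => by
      rw [comp_apply, comparisonHom_apply, hcoord, conjugator_eq (hx m) rfl, inv_mul_cancel]
    rw [this]
    exact tendsto_const_nhds.prodMk_nhds
      ((continuous_ofAdd.tendsto 0).comp (tendsto_subHead_initialSegment 1))
  have hlim : Tendsto (fun m => heisPCoord (h m).right 0) atTop (𝓝 (heisPCoord 1 0)) := by
    let := sdpTop heisP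
    exact (((continuous_apply 0).comp continuous_heisPCoord_right).tendsto 1).comp hconv
  simp only [hcoord, heisPCoord_eq (p := 1) (one_mem heisB) (map_one _)] at hlim
  exact one_ne_zero (tendsto_nhds_unique tendsto_const_nhds hlim)

/-- The generalized Heisenberg group `G = (R × R) ⋊ R` over
`R = (ℤ/2ℤ)^ℕ` is a compact two-step nilpotent topological group such that, with
`P = Γ(B)` for `B = {((0, x), 0) : x ∈ R̃}`, the topological semidirect product `G ⋊ P` is
NOT minimal. -/
theorem heisenberg_semidirectProduct_not_minimal :
    CompactSpace Heis ∧ IsTopologicalGroup Heis ∧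
    (∀ a b : Heis, ⁅a, b⁆ ∈ Subgroup.center Heis) ∧
    ¬ IsMinimalTopGroup (Heis ⋊[actHom heisP] ↥heisP) (sdpTop heisP) :=
  ⟨inferInstance, inferInstance, fun a b => heis_commutatorElement a b ▸ heis_mem_center _,
    not_isMinimalTopGroup_of_injective _ comparisonHom comparisonHom_injective
      continuous_comparisonHom induced_comparisonHom_ne⟩
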